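/- Let V' ⊆ Q_N and let H' = ΓT' + U' where T' is the restriction of the negative hypercube adjacency operator to ℓ²(V') and U' is diagonal with U'(σ) ≥ -εN for all σ ∈ V'. Then 2^{-N} Tr_{ℓ²(V')} e^{-βH'} ≤ exp( N(βε + ln cosh(βΓ)) ) for all β, Γ ≥ 0. -/

import Mathlib

/-!
The off-diagonal entries of `-βH'` are those of `-βΓT'`, which are nonnegative, and on such
(Metzler) matrices `exp` is entrywise monotone; hence `U' ≥ -εN` gives
`e^{-βH'} ≤ e^{βεN} e^{-βΓT'}` entrywise. By the exponential series, the diagonal of `e^{-βΓT'}`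
is dominated by that of `e^{-βΓT}` on the whole cube. The Walsh matrix diagonalises `T`, with
eigenvalues `∑ⱼ ±1`, so `Tr e^{-βΓT} = (2 cosh βΓ)^N`.
-/

/-- The negative adjacency operator `T` of the Hamming cube `Q_N`. -/
def Tmat (N : ℕ) : Matrix (Fin N → Bool) (Fin N → Bool) ℝ :=
  fun σ σ' => if hammingDist σ σ' = 1 then -1 else 0

open NormedSpace Nat Finset Function

namespace Matrix

variable {ι κ : Type*} [Fintype ι] [DecidableEq ι] [Fintype κ] [DecidableEq κ]

theorem hasSum_exp_apply (A : Matrix ι ι ℝ) (i j : ι) :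
    HasSum (fun n : ℕ => (n !⁻¹ : ℝ) * (A ^ n) i j) (exp A i j) := by
  have h : HasSum (fun n : ℕ => (n !⁻¹ : ℝ) • A ^ n) (exp A) :=
    open scoped Matrix.Norms.Operator in exp_series_hasSum_exp' A
  exact Pi.hasSum.mp (Pi.hasSum.mp h i) j

theorem exp_smul_one (c : ℝ) : exp (c • (1 : Matrix ι ι ℝ)) = Real.exp c • 1 := by
  rw [smul_one_eq_diagonal, smul_one_eq_diagonal, exp_diagonal]
  congr 1
  ext
  rw [Pi.coe_exp, Real.exp_eq_exp_ℝ]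

theorem exp_add_smul_one (A : Matrix ι ι ℝ) (c : ℝ) : exp (A + c • 1) = Real.exp c • exp A := by
  rw [exp_add_of_commute _ _ ((Commute.one_right A).smul_right c), exp_smul_one, mul_smul_comm,
    mul_one]

theorem exp_apply_nonneg {A : Matrix ι ι ℝ} (hA : ∀ i j, 0 ≤ A i j) (i j : ι) :
    0 ≤ exp A i j :=
  (hasSum_exp_apply A i j).nonneg fun n => mul_nonneg (by positivity) (pow_apply_nonneg hA n i j)

section Comparison

variable {A : Matrix κ κ ℝ} {B : Matrix ι ι ℝ} {f : κ → ι}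

theorem pow_apply_le_pow_apply_of_le_submatrix (hf : f.Injective) (hA : ∀ i j, 0 ≤ A i j)
    (hB : ∀ i j, 0 ≤ B i j) (hAB : ∀ i j, A i j ≤ B (f i) (f j)) (n : ℕ) (i j : κ) :
    (A ^ n) i j ≤ (B ^ n) (f i) (f j) := by
  induction n generalizing j with
  | zero =>
    simp only [pow_zero, one_apply, hf.eq_iff]
    rfl
  | succ n ih =>
    rw [pow_succ, pow_succ, mul_apply, mul_apply]
    calc ∑ k, (A ^ n) i k * A k j
        ≤ ∑ k, (B ^ n) (f i) (f k) * B (f k) (f j) :=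
          sum_le_sum fun k _ => mul_le_mul (ih k) (hAB k j) (hA k j) (pow_apply_nonneg hB n _ _)
      _ = ∑ l ∈ univ.map ⟨f, hf⟩, (B ^ n) (f i) l * B l (f j) := by rw [sum_map]; rfl
      _ ≤ ∑ l, (B ^ n) (f i) l * B l (f j) :=
          sum_le_sum_of_subset_of_nonneg (subset_univ _) fun l _ _ =>
            mul_nonneg (pow_apply_nonneg hB n _ _) (hB l _)

theorem exp_apply_le_exp_apply_of_le_submatrix (hf : f.Injective) (hA : ∀ i j, 0 ≤ A i j)
    (hB : ∀ i j, 0 ≤ B i j) (hAB : ∀ i j, A i j ≤ B (f i) (f j)) (i j : κ) :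
    exp A i j ≤ exp B (f i) (f j) :=
  hasSum_le (fun n => mul_le_mul_of_nonneg_left
      (pow_apply_le_pow_apply_of_le_submatrix hf hA hB hAB n i j) (by positivity))
    (hasSum_exp_apply A i j) (hasSum_exp_apply B (f i) (f j))

end Comparison

theorem trace_exp_submatrix_le {A : Matrix ι ι ℝ} (hA : ∀ i j, 0 ≤ A i j) {f : κ → ι}
    (hf : f.Injective) : (exp (A.submatrix f f)).trace ≤ (exp A).trace :=
  calc ∑ k, exp (A.submatrix f f) k k
      ≤ ∑ k, exp A (f k) (f k) :=
        sum_le_sum fun k _ =>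
          exp_apply_le_exp_apply_of_le_submatrix hf (fun _ _ => hA _ _) hA (fun _ _ => le_rfl) k k
    _ = ∑ i ∈ univ.map ⟨f, hf⟩, exp A i i := by rw [sum_map]; rfl
    _ ≤ ∑ i, exp A i i :=
        sum_le_sum_of_subset_of_nonneg (subset_univ _) fun i _ _ => exp_apply_nonneg hA i i

/-- Adding a multiple of the identity reduces this to the nonnegative case, since
`exp (A + c • 1) = exp c • exp A`. -/
theorem exp_apply_mono_of_offDiag_nonneg {A B : Matrix ι ι ℝ} (hA : ∀ i j, i ≠ j → 0 ≤ A i j)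
    (hAB : ∀ i j, A i j ≤ B i j) (i j : ι) : exp A i j ≤ exp B i j := by
  set c := ∑ k, |A k k|
  have hAc : ∀ i j, 0 ≤ (A + c • 1) i j := by
    intro i j
    rcases eq_or_ne i j with rfl | hij
    · simp only [add_apply, smul_apply, one_apply_eq, smul_eq_mul, mul_one]
      linarith [neg_abs_le (A i i), single_le_sum (fun k _ => abs_nonneg (A k k)) (mem_univ i)]
    · simpa [one_apply_ne hij] using hA i j hij
  have hAB' : ∀ i j, (A + c • 1) i j ≤ (B + c • 1) i j := fun i j => by
    simpa only [add_apply] using add_le_add_left (hAB i j) _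
  have := exp_apply_le_exp_apply_of_le_submatrix injective_id hAc
    (fun i j => (hAc i j).trans (hAB' i j)) hAB' i j
  rw [exp_add_smul_one, exp_add_smul_one] at this
  exact le_of_mul_le_mul_left this (Real.exp_pos c)

theorem trace_exp_add_diagonal_le {A : Matrix ι ι ℝ} (hA : ∀ i j, i ≠ j → 0 ≤ A i j)
    {d : ι → ℝ} {c : ℝ} (hd : ∀ i, d i ≤ c) :
    (exp (A + diagonal d)).trace ≤ Real.exp c * (exp A).trace := by
  have hle : ∀ i j, (A + diagonal d) i j ≤ (A + c • 1) i j := fun i j => by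
    rcases eq_or_ne i j with rfl | hij
    · simpa using hd i
    · simp [hij]
  have hoff : ∀ i j, i ≠ j → 0 ≤ (A + diagonal d) i j := fun i j hij => by
    simpa [diagonal_apply_ne _ hij] using hA i j hij
  rw [← smul_eq_mul, ← trace_smul, ← exp_add_smul_one]
  exact sum_le_sum fun i _ => exp_apply_mono_of_offDiag_nonneg hoff hle i i

end Matrix

open Matrix

theorem hammingDist_eq_one_iff {ι : Type*} [Fintype ι] [DecidableEq ι] {σ τ : ι → Bool} :
    hammingDist σ τ = 1 ↔ ∃ j, τ = update σ j (!σ j) := by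
  simp only [hammingDist, card_eq_one, Finset.ext_iff, mem_filter, mem_univ, true_and,
    mem_singleton, funext_iff, update_apply]
  refine exists_congr fun j => forall_congr' fun i => ?_
  split_ifs with h <;> subst_vars <;> cases σ i <;> cases τ i <;> simp [*]

theorem injective_update_not {ι : Type*} [DecidableEq ι] (σ : ι → Bool) :
    Injective fun j => update σ j (!σ j) := by
  intro j k h
  by_contra hjk
  simpa [update_of_ne hjk] using congrFun h j

section Hypercube

def walshMatrix (N : ℕ) : Matrix (Fin N → Bool) (Fin N → Bool) ℝ :=
  fun σ s => ∏ j, if σ j && s j then -1 else 1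

variable {N : ℕ}

theorem walshMatrix_mul_self : walshMatrix N * walshMatrix N = (2 ^ N : ℝ) • 1 := by
  ext σ τ
  have hcoord : ∀ j, ∑ b, (if σ j && b then (-1 : ℝ) else 1) * (if b && τ j then -1 else 1) =
      if σ j = τ j then 2 else 0 := fun j => by
    cases σ j <;> cases τ j <;> norm_num
  simp only [mul_apply, walshMatrix, ← prod_mul_distrib]
  rw [← Fintype.prod_sum fun j b =>
      (if σ j && b then (-1 : ℝ) else 1) * (if b && τ j then -1 else 1),
    prod_congr rfl fun j _ => hcoord j, Fintype.prod_ite_zero]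
  simp [one_apply, funext_iff]

theorem walshMatrix_update_not (σ s : Fin N → Bool) (j : Fin N) :
    walshMatrix N (update σ j (!σ j)) s = (if s j then -1 else 1) * walshMatrix N σ s := by
  have hrest : ∏ k ∈ {j}ᶜ, (if update σ j (!σ j) k && s k then (-1 : ℝ) else 1) =
      ∏ k ∈ {j}ᶜ, (if σ k && s k then -1 else 1) :=
    prod_congr rfl fun k hk => by rw [update_of_ne (by simpa using hk)]
  simp only [walshMatrix]
  rw [Fintype.prod_eq_mul_prod_compl j, Fintype.prod_eq_mul_prod_compl j, hrest, update_self,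
    ← mul_assoc]
  congr 1
  cases σ j <;> cases s j <;> norm_num

def cubeEigenvalue (s : Fin N → Bool) : ℝ := ∑ j, if s j then 1 else -1

theorem Tmat_mul_walshMatrix :
    Tmat N * walshMatrix N = walshMatrix N * diagonal cubeEigenvalue := by
  ext σ s
  have hnbr : univ.filter (fun σ' => hammingDist σ σ' = 1) =
      univ.map ⟨fun j => update σ j (!σ j), injective_update_not σ⟩ := by
    ext σ'
    simp only [mem_filter, mem_univ, true_and, mem_map, Embedding.coeFn_mk,
      hammingDist_eq_one_iff]
    exact exists_congr fun _ => eq_comm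
  calc (Tmat N * walshMatrix N) σ s
      = ∑ σ' ∈ univ.filter (fun σ' => hammingDist σ σ' = 1), -walshMatrix N σ' s := by
        simp only [mul_apply, Tmat, sum_filter]
        exact sum_congr rfl fun σ' _ => by split_ifs <;> simp
    _ = ∑ j, walshMatrix N σ s * (if s j then 1 else -1) := by
        simp only [hnbr, sum_map, Embedding.coeFn_mk, walshMatrix_update_not]
        exact sum_congr rfl fun j _ => by split_ifs <;> ring
    _ = (walshMatrix N * diagonal cubeEigenvalue : Matrix _ _ ℝ) σ s := by
        rw [mul_diagonal, cubeEigenvalue, mul_sum]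

theorem sum_exp_smul_cubeEigenvalue (x : ℝ) :
    ∑ s : Fin N → Bool, Real.exp (x * cubeEigenvalue s) = (2 * Real.cosh x) ^ N := by
  set f : Bool → ℝ := fun b => Real.exp (x * if b then 1 else -1)
  have hf : ∑ b, f b = 2 * Real.cosh x := by
    simp [f, Real.cosh_eq]; ring
  calc ∑ s : Fin N → Bool, Real.exp (x * cubeEigenvalue s)
      = ∑ s : Fin N → Bool, ∏ j, f (s j) := by
        simp only [cubeEigenvalue, mul_sum, Real.exp_sum, f]
    _ = (2 * Real.cosh x) ^ N := by
        rw [← Fintype.prod_sum fun _ => f, hf, prod_const, Finset.card_univ, Fintype.card_fin]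

theorem trace_exp_smul_Tmat (x : ℝ) : (exp (x • Tmat N)).trace = (2 * Real.cosh x) ^ N := by
  have hW : walshMatrix N * ((2 ^ N : ℝ)⁻¹ • walshMatrix N) = 1 := by
    rw [Matrix.mul_smul, walshMatrix_mul_self, smul_smul, inv_mul_cancel₀ (by positivity), one_smul]
  have hdet : IsUnit (walshMatrix N).det := isUnit_det_of_right_inverse hW
  have hconj :
      x • Tmat N = walshMatrix N * diagonal (x • cubeEigenvalue) * (walshMatrix N)⁻¹ := by
    rw [diagonal_smul, mul_smul_comm, ← Tmat_mul_walshMatrix, smul_mul_assoc, mul_assoc,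
      mul_nonsing_inv _ hdet, mul_one]
  rw [hconj, exp_conj _ _ ((isUnit_iff_isUnit_det _).mpr hdet), trace_mul_cycle,
    nonsing_inv_mul _ hdet, one_mul, exp_diagonal, trace_diagonal]
  simpa [Pi.coe_exp, ← Real.exp_eq_exp_ℝ] using sum_exp_smul_cubeEigenvalue x

end Hypercube

/-- For `H' = ΓT' + U'` on `ℓ²(V')` with `T'` the restriction of the negative hypercube
adjacency operator and `U' ≥ -εN` diagonal,
`2^{-N} Tr e^{-βH'} ≤ exp(N(βε + ln cosh(βΓ)))`. -/
theorem restricted_trace_bound (N : ℕ) (V' : Finset (Fin N → Bool)) (β Γ ε : ℝ)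
    (hβ : 0 ≤ β) (hΓ : 0 ≤ Γ)
    (U' : {x // x ∈ V'} → ℝ) (hU : ∀ σ, -(ε * N) ≤ U' σ) :
    (2 : ℝ)⁻¹ ^ N * (NormedSpace.exp (-(β •
        (Γ • ((Tmat N).submatrix (Subtype.val : {x // x ∈ V'} → (Fin N → Bool)) Subtype.val)
          + Matrix.diagonal U')))).trace ≤
      Real.exp (N * (β * ε + Real.log (Real.cosh (β * Γ)))) := by
  set A := -(β * Γ) • Tmat N
  have hA : ∀ σ σ', 0 ≤ A σ σ' := fun σ σ' => by
    have := mul_nonneg hβ hΓ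
    simp only [A, Matrix.smul_apply, smul_eq_mul, Tmat]
    split_ifs <;> simp [this]
  have hH : -(β • (Γ • (Tmat N).submatrix Subtype.val Subtype.val + diagonal U')) =
      A.submatrix (Subtype.val : {x // x ∈ V'} → _) Subtype.val + diagonal (-(β • U')) := by
    ext i j
    rcases eq_or_ne i j with rfl | hij
    · simp [A]; ring
    · simp [A, hij]; ring
  have hβU : ∀ σ, (-(β • U')) σ ≤ β * (ε * N) := fun σ => by
    simpa using mul_le_mul_of_nonneg_left (neg_le.mp (hU σ)) hβ
  have hcosh : Real.cosh (β * Γ) ^ N = (2 : ℝ)⁻¹ ^ N * (exp A).trace := by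
    rw [trace_exp_smul_Tmat, Real.cosh_neg, mul_pow, ← mul_assoc, ← mul_pow,
      inv_mul_cancel₀ two_ne_zero, one_pow, one_mul]
  calc _ ≤ (2 : ℝ)⁻¹ ^ N * (Real.exp (β * (ε * N)) * (exp A).trace) := by
        rw [hH]
        gcongr
        exact (trace_exp_add_diagonal_le (fun _ _ _ => hA _ _) hβU).trans
          (by gcongr; exact trace_exp_submatrix_le hA Subtype.val_injective)
    _ = Real.exp (N * (β * ε + Real.log (Real.cosh (β * Γ)))) := by
        rw [mul_add, Real.exp_add, Real.exp_nat_mul (Real.log _), Real.exp_log (Real.cosh_pos _),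
          hcosh]
        ring_nf
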